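/- arXiv:2003.06867 — 4 statements merged into one kernel-verified Lean document; each statement's English description precedes it below -/
import Mathlib

section
/- With C_d := e^{d/4} √2 / (8d)^{d/4} · √(Γ(d)/Γ(d/2)), one has C_d ≤ 2^{-d/2 + 1/4} for all natural numbers d ≥ 1. -/
/-!
By the duplication formula `Γ(d/2) Γ((d+1)/2) = 2^(1-d) √π Γ(d)`, everything reduces to the
Stirling-type bound `Γ(x + 1/2) ≤ √(2π) (x/e)^x` at `x = d/2`.

For an integer `x = m` we have `Γ(m + 1/2) = (2m)! √π / (4^m m!)`, and the bound is the
monotonicity of the Stirling sequence `s n = n! / (√(2n) (n/e)^n)`: `s (2m) ≤ s m`.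
For `x = k + 1/2` it is `k! ≤ √(2π) ((k + 1/2)/e)^(k + 1/2)`, which follows from Robbins'
estimate `s k ≤ √π e^(1/(12k))` and `log (1 + t) ≥ 2t/(t + 2)` at `t = 1/(2k)`.
-/

open Real Filter Topology
open scoped Nat

namespace Stirling

theorem stirlingSeq_le_sqrt_pi_mul_exp {n : ℕ} (hn : n ≠ 0) :
    stirlingSeq n ≤ √π * exp (1 / (12 * n)) := by
  obtain ⟨k, rfl⟩ := Nat.exists_eq_succ_of_ne_zero hn
  -- Robbins' bound makes `log (stirlingSeq n) - 1 / (12 n)` increase to its limit `log √π`.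
  have hmono : Monotone fun k : ℕ ↦ log (stirlingSeq (k + 1)) - 1 / (12 * (k + 1 : ℕ)) := by
    refine monotone_nat_of_le_succ fun k ↦ ?_
    have hstep := log_stirlingSeq_sdiff_le (k + 1)
    have htelescope : (1 : ℝ) / (12 * (k + 1 : ℕ) * ((k + 1 : ℕ) + 1))
        = 1 / (12 * (k + 1 : ℕ)) - 1 / (12 * (k + 1 + 1 : ℕ)) := by
      push_cast; field_simp; ring
    linarith
  have hlim : Tendsto (fun k : ℕ ↦ log (stirlingSeq (k + 1)) - 1 / (12 * (k + 1 : ℕ))) atTop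
      (𝓝 (log √π - 0)) :=
    ((continuousAt_log (by positivity)).tendsto.comp
      (tendsto_stirlingSeq_sqrt_pi.comp (tendsto_add_atTop_nat 1))).sub <|
      tendsto_const_nhds.div_atTop <| (tendsto_natCast_atTop_atTop.comp
        (tendsto_add_atTop_nat 1)).const_mul_atTop (by norm_num)
  rw [← log_le_log_iff (stirlingSeq'_pos k) (by positivity),
    log_mul (by positivity) (by positivity), log_exp]
  linarith [hmono.ge_of_tendsto hlim k]

theorem factorial_eq_stirlingSeq_mul {n : ℕ} (hn : n ≠ 0) :
    (n ! : ℝ) = stirlingSeq n * (√(2 * n) * (n / exp 1) ^ n) := by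
  rw [stirlingSeq, div_mul_cancel₀]
  positivity

end Stirling

open Stirling

theorem exp_inv_twelve_add_half_le {x : ℝ} (hx : 1 / 2 ≤ x) :
    exp (1 / (12 * x) + 1 / 2) ≤ (1 + 1 / (2 * x)) ^ (x + 1 / 2) := by
  have hx0 : 0 < x := by linarith
  have hlog := le_log_one_add_of_nonneg (x := 1 / (2 * x)) (by positivity)
  rw [rpow_def_of_pos (by positivity), exp_le_exp]
  calc 1 / (12 * x) + 1 / 2 ≤ 1 / (8 * x + 2) + 1 / 2 := by gcongr; linarith
    _ = 2 * (1 / (2 * x)) / (1 / (2 * x) + 2) * (x + 1 / 2) := by field_simp; ring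
    _ ≤ log (1 + 1 / (2 * x)) * (x + 1 / 2) := by gcongr

theorem factorial_le_sqrt_two_pi_mul_rpow (k : ℕ) :
    (k ! : ℝ) ≤ √(2 * π) * ((k + 1 / 2) / exp 1) ^ ((k : ℝ) + 1 / 2) := by
  rcases eq_or_ne k 0 with rfl | hk
  · rw [Nat.factorial_zero, Nat.cast_one, CharP.cast_eq_zero, zero_add, ← sqrt_eq_rpow,
      ← sqrt_mul (by positivity), one_le_sqrt,
      show 2 * π * (1 / 2 / exp 1) = π / exp 1 by field_simp, one_le_div (exp_pos 1)]
    linarith [exp_one_lt_d9, pi_gt_three]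
  have hk0 : (0 : ℝ) < k := by positivity
  have hk1 : (1 : ℝ) / 2 ≤ k := by
    have : (1 : ℝ) ≤ k := Nat.one_le_cast.mpr (Nat.one_le_iff_ne_zero.mpr hk)
    linarith
  calc (k ! : ℝ) = stirlingSeq k * (√(2 * k) * (k / exp 1) ^ k) :=
        factorial_eq_stirlingSeq_mul hk
    _ ≤ √π * exp (1 / (12 * k)) * (√(2 * k) * (k / exp 1) ^ k) := by
        gcongr; exact stirlingSeq_le_sqrt_pi_mul_exp hk
    _ = √(2 * π) * (k ^ ((k : ℝ) + 1 / 2) * exp (1 / (12 * k) + 1 / 2))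
          / exp ((k : ℝ) + 1 / 2) := by
        rw [exp_add, exp_add, rpow_add hk0, rpow_natCast, ← sqrt_eq_rpow, div_pow,
          ← exp_nat_mul, mul_one, sqrt_mul zero_le_two, sqrt_mul zero_le_two]
        field_simp
    _ ≤ √(2 * π) * (k ^ ((k : ℝ) + 1 / 2) * (1 + 1 / (2 * k)) ^ ((k : ℝ) + 1 / 2))
          / exp ((k : ℝ) + 1 / 2) := by
        gcongr; exact exp_inv_twelve_add_half_le hk1
    _ = √(2 * π) * ((k + 1 / 2) / exp 1) ^ ((k : ℝ) + 1 / 2) := by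
        rw [← mul_rpow (by positivity) (by positivity), div_rpow (by positivity) (by positivity),
          exp_one_rpow]
        field_simp

theorem factorial_two_mul_le (m : ℕ) :
    ((2 * m)! : ℝ) ≤ √2 * 4 ^ m * (m / exp 1) ^ m * m ! := by
  rcases eq_or_ne m 0 with rfl | hm
  · simp
  have h2m : 2 * m ≠ 0 := by positivity
  have hs : stirlingSeq (2 * m) ≤ stirlingSeq m := by
    obtain ⟨k, rfl⟩ := Nat.exists_eq_succ_of_ne_zero hm
    exact stirlingSeq'_antitone (show k ≤ 2 * k + 1 by omega)
  rw [factorial_eq_stirlingSeq_mul h2m, factorial_eq_stirlingSeq_mul hm]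
  have hsplit : √(2 * (2 * m : ℕ)) * ((2 * m : ℕ) / exp 1) ^ (2 * m)
      = √2 * 4 ^ m * (m / exp 1) ^ m * (√(2 * m) * (m / exp 1) ^ m) := by
    rw [show (2 * (2 * m : ℕ) : ℝ) = 2 * (2 * m) by push_cast; ring, sqrt_mul zero_le_two,
      show (4 : ℝ) ^ m = 2 ^ (2 * m) by rw [pow_mul]; norm_num]
    push_cast
    ring
  rw [hsplit, mul_left_comm]
  gcongr

theorem Gamma_nat_add_half_eq (m : ℕ) :
    Gamma (m + 1 / 2) = (2 * m)! * √π / (4 ^ m * m !) := by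
  have hdup := Gamma_mul_Gamma_add_half (m + 1 / 2)
  rw [add_assoc, add_halves, Real.Gamma_nat_eq_factorial,
    show 2 * ((m : ℝ) + 1 / 2) = (2 * m : ℕ) + 1 by push_cast; ring,
    Real.Gamma_nat_eq_factorial, show (1 : ℝ) - ((2 * m : ℕ) + 1) = -(2 * m : ℕ) by ring,
    rpow_neg zero_le_two, rpow_natCast, pow_mul, show (2 : ℝ) ^ 2 = 4 by norm_num] at hdup
  rw [eq_div_iff (by positivity), mul_left_comm, hdup]
  field_simp

theorem Gamma_nat_add_half_le (m : ℕ) :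
    Gamma (m + 1 / 2) ≤ √(2 * π) * (m / exp 1) ^ m := by
  rw [Gamma_nat_add_half_eq, div_le_iff₀ (by positivity), sqrt_mul zero_le_two]
  calc ((2 * m)! : ℝ) * √π ≤ √2 * 4 ^ m * (m / exp 1) ^ m * m ! * √π := by
        gcongr; exact factorial_two_mul_le m
    _ = _ := by ring

theorem Gamma_add_one_div_two_le (d : ℕ) :
    Gamma ((d + 1) / 2) ≤ √(2 * π) * (d / (2 * exp 1)) ^ ((d : ℝ) / 2) := by
  obtain ⟨m, rfl | rfl⟩ := d.even_or_odd'
  · convert Gamma_nat_add_half_le m using 2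
    · push_cast; ring
    · rw [show ((2 * m : ℕ) : ℝ) / 2 = m by push_cast; ring, rpow_natCast]
      push_cast
      field_simp
  · convert factorial_le_sqrt_two_pi_mul_rpow m using 2
    · rw [← Real.Gamma_nat_eq_factorial]
      push_cast; ring_nf
    · push_cast
      congr 1
      · field_simp
      · ring

theorem Gamma_div_Gamma_half_le (d : ℕ) (hd : d ≠ 0) :
    Gamma d / Gamma (d / 2) ≤ 2 ^ ((d : ℝ) - 1 / 2) * (d / (2 * exp 1)) ^ ((d : ℝ) / 2) := by
  have hdup := Gamma_mul_Gamma_add_half ((d : ℝ) / 2)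
  rw [mul_div_cancel₀ _ two_ne_zero, ← add_div] at hdup
  have hΓ : 0 < Gamma ((d : ℝ) / 2) := Gamma_pos_of_pos (by positivity)
  have hpow : (2 : ℝ) ^ ((d : ℝ) - 1 / 2) * (2 ^ (1 - (d : ℝ)) * √π) = √(2 * π) := by
    rw [← mul_assoc, ← rpow_add two_pos, sqrt_mul zero_le_two, sqrt_eq_rpow 2]
    ring_nf
  rw [div_le_iff₀ hΓ]
  refine le_of_mul_le_mul_right ?_ (by positivity : (0 : ℝ) < 2 ^ (1 - (d : ℝ)) * √π)
  calc Gamma d * (2 ^ (1 - (d : ℝ)) * √π) = Gamma (d / 2) * Gamma ((d + 1) / 2) := by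
        rw [hdup]; ring
    _ ≤ Gamma (d / 2) * (√(2 * π) * (d / (2 * exp 1)) ^ ((d : ℝ) / 2)) := by
        gcongr; exact Gamma_add_one_div_two_le d
    _ = _ := by rw [← hpow]; ring

theorem Cd_le (d : ℕ) (hd : 1 ≤ d) :
    Real.exp ((d : ℝ) / 4) * Real.sqrt 2 / (8 * (d : ℝ)) ^ ((d : ℝ) / 4)
        * Real.sqrt (Real.Gamma d / Real.Gamma ((d : ℝ) / 2))
      ≤ (2 : ℝ) ^ (-(d : ℝ) / 2 + 1 / 4) := by
  calc _ ≤ exp (d / 4) * √2 / (8 * d) ^ ((d : ℝ) / 4)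
        * √(2 ^ ((d : ℝ) - 1 / 2) * (d / (2 * exp 1)) ^ ((d : ℝ) / 2)) := by
        gcongr
        exact Gamma_div_Gamma_half_le d (by omega)
    _ = 2 ^ (-(d : ℝ) / 2 + 1 / 4) := by
      refine log_injOn_pos (Set.mem_Ioi.2 (by positivity)) (Set.mem_Ioi.2 (by positivity)) ?_
      have hlog8 : log 8 = 3 * log 2 := by
        rw [show (8 : ℝ) = 2 ^ 3 by norm_num, Real.log_pow]; norm_num
      simp (disch := positivity) only [log_mul, log_div, log_rpow, log_sqrt, log_exp, hlog8]
      ring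
end

section
/- For all real x with 0 < x < 1, we have (5/2)·x² + log(1+x) ≤ (x + x²)/(1+2x)² · (1 + 5x + (8/γ²)·x²), where γ = (2/5)·√(5(1 + (1/4)·log 2)). -/
/-!
Bound `log (1 + x)` by its `[2/1]` Padé approximant `x (x + 6) / (4 x + 6)`, which exceeds it
on `x ≥ 0` because the difference vanishes at `0` and has derivative
`x ^ 3 / ((1 + x) (2 x + 3) ^ 2)`.
After clearing denominators the claim becomes `x ^ 3 q(x) ≥ 0` for a quadratic `q` that is
nonnegative on `[0, 1]` as soon as the coefficient `8 / γ ^ 2 = 40 / (4 + log 2)` is at least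
`42 / 5`, i.e. as soon as `log 2 ≤ 16 / 21`.
-/

open Real

theorem Real.log_one_add_le_pade {x : ℝ} (hx : 0 ≤ x) :
    log (1 + x) ≤ x * (x + 6) / (4 * x + 6) := by
  set f : ℝ → ℝ := fun t => t * (t + 6) / (4 * t + 6) - log (1 + t)
  have hderiv : ∀ t, 0 ≤ t → HasDerivAt f (t ^ 3 / ((1 + t) * (2 * t + 3) ^ 2)) t := by
    intro t ht
    have hquot : HasDerivAt (fun u : ℝ => u * (u + 6) / (4 * u + 6))
        (((1 * (t + 6) + t * 1) * (4 * t + 6) - t * (t + 6) * (4 * 1)) / (4 * t + 6) ^ 2) t :=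
      ((hasDerivAt_id t).mul ((hasDerivAt_id t).add_const 6)).div
        (((hasDerivAt_id t).const_mul 4).add_const 6) (by positivity)
    have hlog : HasDerivAt (fun u : ℝ => log (1 + u)) ((1 + t)⁻¹ * 1) t :=
      (hasDerivAt_log (by positivity)).comp t ((hasDerivAt_id t).const_add 1)
    refine (hquot.sub hlog).congr_deriv ?_
    field_simp
    ring
  have hmono : MonotoneOn f (Set.Ici 0) := by
    refine monotoneOn_of_hasDerivWithinAt_nonneg (convex_Ici 0)
      (fun t ht => (hderiv t ht).continuousAt.continuousWithinAt)
      (fun t ht => (hderiv t (interior_subset ht)).hasDerivWithinAt) fun t ht => ?_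
    rw [interior_Ici] at ht
    have ht : 0 < t := ht
    positivity
  simpa [f, sub_nonneg] using hmono Set.self_mem_Ici hx hx

theorem five_halves_sq_add_pade_le {x c : ℝ} (hc : 42 / 5 ≤ c) (hx0 : 0 ≤ x) (hx1 : x ≤ 1) :
    5 / 2 * x ^ 2 + x * (x + 6) / (4 * x + 6)
      ≤ (x + x ^ 2) / (1 + 2 * x) ^ 2 * (1 + 5 * x + c * x ^ 2) := by
  have hdiff : (x + x ^ 2) / (1 + 2 * x) ^ 2 * (1 + 5 * x + c * x ^ 2)
      - (5 / 2 * x ^ 2 + x * (x + 6) / (4 * x + 6))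
      = x ^ 3 * ((6 * c - 44) * (1 - x ^ 2) + (10 * c - 84) * x * (x + 1))
        / ((4 * x + 6) * (1 + 2 * x) ^ 2) := by
    field_simp
    ring
  have : 0 ≤ 1 - x ^ 2 := by nlinarith
  have : 0 ≤ 6 * c - 44 := by linarith
  have : 0 ≤ 10 * c - 84 := by linarith
  rw [← sub_nonneg, hdiff]
  positivity

theorem eight_div_sq_eq :
    8 / ((2 / 5) * sqrt (5 * (1 + (1 / 4) * log 2))) ^ 2 = 40 / (4 + log 2) := by
  rw [mul_pow, sq_sqrt (by positivity [log_pos one_lt_two])]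
  field_simp
  ring

theorem elementary_calc_ineq (x : ℝ) (hx0 : 0 < x) (hx1 : x < 1) :
    (5 / 2) * x ^ 2 + Real.log (1 + x)
      ≤ (x + x ^ 2) / (1 + 2 * x) ^ 2 *
        (1 + 5 * x + (8 / ((2 / 5) * Real.sqrt (5 * (1 + (1 / 4) * Real.log 2))) ^ 2) * x ^ 2) := by
  have hconst : 42 / 5 ≤ 8 / ((2 / 5) * sqrt (5 * (1 + (1 / 4) * log 2))) ^ 2 := by
    rw [eight_div_sq_eq, le_div_iff₀ (by positivity [log_pos one_lt_two])]
    linarith [log_two_lt_d9]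
  calc 5 / 2 * x ^ 2 + log (1 + x) ≤ 5 / 2 * x ^ 2 + x * (x + 6) / (4 * x + 6) := by
        gcongr
        exact log_one_add_le_pade hx0.le
    _ ≤ _ := five_halves_sq_add_pade_le hconst hx0.le hx1.le
end

section
/- Let d ≥ 2 be a natural number, let c = (1/4)·√(5(1 + (log 2)/4)) and y_d = 1/(1 + 16c/(5√d))². Then log(2^{1/4 - d/2} · (1 + 1/√(y_d))^{d/2}) + 1 ≤ (1 - y_d) · (d/8 + c·√d + 1). -/
/-!
Put γ = (8/5)c, so γ² = (4 + log 2)/5, and t = γ/√d. Then 1/√y = 1 + 2t, c√d = (5/8)td and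
log 2 / 4 + 1 = (5/4)t²d, so the claim reads
(5/4)t²d + (d/2)·log(1 + t) ≤ (1 - (1 + 2t)⁻²)(d/8 + (5/8)td + 1).
Bounding log(1 + t) by its cubic Taylor polynomial leaves γ²(22 + 28t + 4t²) ≤ 24(1 + t) for
t² = γ²/d ≤ γ²/2. This is tight (the margin is about 0.03 at d = 2), so it needs log 2 to four
digits.
-/

open Real

lemma Real.log_one_add_le_cubic {t : ℝ} (ht : 0 ≤ t) :
    log (1 + t) ≤ t - t ^ 2 / 2 + t ^ 3 / 3 := by
  let F : ℝ → ℝ := fun u ↦ u - u ^ 2 / 2 + u ^ 3 / 3 - log (1 + u)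
  have hF : ∀ u ∈ Set.Ici (0 : ℝ), HasDerivAt F (u ^ 3 / (1 + u)) u := by
    intro u (hu : 0 ≤ u)
    have hlog := ((hasDerivAt_id' u).const_add 1).log (by linarith)
    refine ((((hasDerivAt_id' u).sub ((hasDerivAt_pow 2 u).div_const 2)).add
      ((hasDerivAt_pow 3 u).div_const 3)).sub hlog).congr_deriv ?_
    field_simp
    ring
  have hmono : MonotoneOn F (Set.Ici 0) :=
    monotoneOn_of_hasDerivWithinAt_nonneg (convex_Ici 0)
      (fun u hu ↦ (hF u hu).continuousAt.continuousWithinAt)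
      (fun u hu ↦ (hF u (interior_subset hu)).hasDerivWithinAt)
      (fun u hu ↦ by
        have hu : 0 ≤ u := interior_subset hu
        positivity)
  have := hmono Set.self_mem_Ici (Set.mem_Ici.mpr ht) ht
  simp only [F] at this
  norm_num at this
  linarith

lemma sq_mul_add_half_mul_log_one_add_le {t d : ℝ} (ht : 0 ≤ t) (hd : 0 ≤ d)
    (hpoly : t ^ 2 * d * (22 + 28 * t + 4 * t ^ 2) ≤ 24 * (1 + t)) :
    5 / 4 * (t ^ 2 * d) + d / 2 * log (1 + t)
      ≤ (1 - 1 / (1 + 2 * t) ^ 2) * (d / 8 + 5 / 8 * t * d + 1) := by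
  have hlog := mul_le_mul_of_nonneg_left (log_one_add_le_cubic ht) (by positivity : 0 ≤ d / 2)
  have hgap : (1 - 1 / (1 + 2 * t) ^ 2) * (d / 8 + 5 / 8 * t * d + 1)
      - (5 / 4 * (t ^ 2 * d) + d / 2 * (t - t ^ 2 / 2 + t ^ 3 / 3))
      = t * (24 * (1 + t) - t ^ 2 * d * (22 + 28 * t + 4 * t ^ 2)) / (6 * (1 + 2 * t) ^ 2) := by
    field_simp
    ring
  have : 0 ≤ t * (24 * (1 + t) - t ^ 2 * d * (22 + 28 * t + 4 * t ^ 2)) / (6 * (1 + 2 * t) ^ 2) :=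
    div_nonneg (mul_nonneg ht (sub_nonneg.mpr hpoly)) (by positivity)
  linarith

noncomputable def gammaSq : ℝ := (4 + log 2) / 5

lemma gammaSq_mul_le {t : ℝ} (ht : 0 ≤ t) (ht2 : 2 * t ^ 2 ≤ gammaSq) :
    gammaSq * (22 + 28 * t + 4 * t ^ 2) ≤ 24 * (1 + t) := by
  have hL1 := log_two_gt_d9
  have hL2 := log_two_lt_d9
  unfold gammaSq at *
  nlinarith [sq_nonneg (t - 0.685), mul_nonneg ht (sub_nonneg.mpr hL2.le)]

theorem log_Cd_ineq (d : ℕ) (hd : 2 ≤ d)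
    (c : ℝ) (hc : c = (1 / 4) * Real.sqrt (5 * (1 + Real.log 2 / 4)))
    (y : ℝ) (hy : y = 1 / (1 + 16 * c / (5 * Real.sqrt d)) ^ 2) :
    Real.log ((2 : ℝ) ^ ((1 : ℝ) / 4 - (d : ℝ) / 2) * (1 + 1 / Real.sqrt y) ^ ((d : ℝ) / 2)) + 1
      ≤ (1 - y) * ((d : ℝ) / 8 + c * Real.sqrt d + 1) := by
  have hd2 : (2 : ℝ) ≤ d := by exact_mod_cast hd
  have hd0 : (0 : ℝ) < d := by linarith
  have hc0 : 0 ≤ c := by rw [hc]; positivity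
  have hc2 : c ^ 2 = 5 * (1 + log 2 / 4) / 16 := by
    rw [hc, mul_pow, sq_sqrt (by positivity)]
    ring
  set t := 8 * c / (5 * √d) with ht_def
  have ht : 0 ≤ t := by positivity
  have htd : t ^ 2 * d = gammaSq := by
    rw [ht_def, div_pow, mul_pow, mul_pow, sq_sqrt hd0.le, hc2, gammaSq]
    field_simp
    ring
  have hy' : y = 1 / (1 + 2 * t) ^ 2 := by rw [hy, ht_def]; ring
  have h1y : 1 + 1 / √y = 2 * (1 + t) := by
    rw [hy', one_div ((1 + 2 * t) ^ 2), sqrt_inv, sqrt_sq (by positivity), one_div, inv_inv]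
    ring
  have hlog : log ((2 : ℝ) ^ ((1 : ℝ) / 4 - (d : ℝ) / 2) * (1 + 1 / √y) ^ ((d : ℝ) / 2))
      = log 2 / 4 + d / 2 * log (1 + t) := by
    rw [h1y, log_mul (by positivity) (by positivity), log_rpow two_pos,
      log_rpow (by positivity), log_mul two_ne_zero (by positivity)]
    ring
  have hcd : c * √d = 5 / 8 * t * d := by
    rw [ht_def]
    field_simp
    rw [sq_sqrt hd0.le]
  have hpoly : t ^ 2 * d * (22 + 28 * t + 4 * t ^ 2) ≤ 24 * (1 + t) := by
    rw [htd]
    exact gammaSq_mul_le ht (by nlinarith)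
  calc log ((2 : ℝ) ^ ((1 : ℝ) / 4 - (d : ℝ) / 2) * (1 + 1 / √y) ^ ((d : ℝ) / 2)) + 1
      = 5 / 4 * (t ^ 2 * d) + d / 2 * log (1 + t) := by rw [hlog, htd, gammaSq]; ring
    _ ≤ (1 - 1 / (1 + 2 * t) ^ 2) * (d / 8 + 5 / 8 * t * d + 1) :=
      sq_mul_add_half_mul_log_one_add_le ht hd0.le hpoly
    _ = (1 - y) * (d / 8 + c * √d + 1) := by rw [hy', hcd]
end

section
/- Let d ≥ 2 and define A_d = log(2^{d/2} e^{d/4} √2 / (8d)^{d/4} · √(Γ(d)/Γ(d/2))) and F_d(y) = -d/4 + d√y/4 + y(1 + A_d) + (d/2)·y·log((1 + 1/√y)/2) for y ∈ (0,1). If A_d > -1, then F_d is strictly increasing on (0,1), F_d(y) → -d/4 as y → 0⁺, and F_d(1) = 1 + A_d > 0; hence F_d has a unique zero in (0,1). -/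
/-!
Write `c = 1 + A_d`. For `0 < y ≤ 1` the derivative
`F_d' y = c + d / (8 √y) - d / (4 (√y + 1)) + (d / 2) log ((1 + 1 / √y) / 2)`
exceeds `c > 0`, since `1 / √y ≥ 1` makes both the difference of fractions and the logarithm
nonnegative. Near `0`, `y log ((1 + 1 / √y) / 2) = y log ((√y + 1) / 2) - √y (√y log √y)` is
continuous with value `0`, so `F_d → -d / 4 < 0`, while `F_d 1 = c > 0`. The intermediate value
theorem gives a zero, and strict monotonicity makes it unique.
-/

open Filter Topology Real Set

theorem existsUnique_eq_zero_of_strictMonoOn_Ioc {α : Type*} [ConditionallyCompleteLinearOrder α]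
    [TopologicalSpace α] [OrderTopology α] [DenselyOrdered α] {f : α → ℝ} {a b : α} {L : ℝ}
    (hab : a < b) (hf : ContinuousOn f (Ioc a b)) (hmono : StrictMonoOn f (Ioc a b))
    (hlim : Tendsto f (𝓝[>] a) (𝓝 L)) (hL : L < 0) (hb : 0 < f b) :
    ∃! y, y ∈ Ioo a b ∧ f y = 0 := by
  have : (𝓝[>] a).NeBot := nhdsGT_neBot_of_exists_gt ⟨b, hab⟩
  have hnear : ∀ᶠ y in 𝓝[>] a, y ∈ Ioo a b := Ioo_mem_nhdsGT hab
  obtain ⟨y₀, hy₀, hfy₀⟩ := (hnear.and (hlim.eventually_lt_const hL)).exists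
  obtain ⟨y, hy, hfy⟩ := intermediate_value_Icc hy₀.2.le
    (hf.mono fun x hx ↦ ⟨hy₀.1.trans_le hx.1, hx.2⟩) ⟨hfy₀.le, hb.le⟩
  have hyb : y ≠ b := by rintro rfl; exact hb.ne' hfy
  refine ⟨y, ⟨⟨hy₀.1.trans_le hy.1, hy.2.lt_of_ne hyb⟩, hfy⟩, ?_⟩
  rintro z ⟨hz, hfz⟩
  exact hmono.injOn (Ioo_subset_Ioc_self hz) ⟨hy₀.1.trans_le hy.1, hy.2⟩ (hfz.trans hfy.symm)

/-- The paper's `F_d` with `1 + A_d` written as `c`. -/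
noncomputable def Fd (d c y : ℝ) : ℝ :=
  -d / 4 + d * √y / 4 + y * c + d / 2 * (y * log ((1 + 1 / √y) / 2))

theorem hasDerivAt_log_one_add_inv_sqrt_div_two {y : ℝ} (hy : 0 < y) :
    HasDerivAt (fun y ↦ log ((1 + 1 / √y) / 2)) (-1 / (2 * y * (√y + 1))) y := by
  have hs : 0 < √y := sqrt_pos.mpr hy
  simp only [one_div]
  convert ((((hasDerivAt_sqrt hy.ne').fun_inv hs.ne').const_add 1).div_const 2).log
    (by positivity) using 1
  nth_rw 1 [← sq_sqrt hy.le]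
  field_simp

theorem hasDerivAt_Fd (d c : ℝ) {y : ℝ} (hy : 0 < y) :
    HasDerivAt (Fd d c)
      (d / (8 * √y) + c + d / 2 * (log ((1 + 1 / √y) / 2) - 1 / (2 * (√y + 1)))) y := by
  have hs : 0 < √y := sqrt_pos.mpr hy
  have h := (((((hasDerivAt_sqrt hy.ne').const_mul d).div_const 4).const_add (-d / 4)).fun_add
    (hasDerivAt_mul_const c)).fun_add
      (((hasDerivAt_id' y).fun_mul (hasDerivAt_log_one_add_inv_sqrt_div_two hy)).const_mul (d / 2))
  refine (h : HasDerivAt (Fd d c) _ y).congr_deriv ?_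
  field_simp
  ring

theorem continuousOn_Fd (d c : ℝ) : ContinuousOn (Fd d c) (Ioi 0) :=
  fun _ hy ↦ (hasDerivAt_Fd d c hy).continuousAt.continuousWithinAt

theorem Fd_one (d c : ℝ) : Fd d c 1 = c := by
  simp only [Fd, sqrt_one, div_one, one_add_one_eq_two, div_self (two_ne_zero (α := ℝ)), log_one]
  ring

theorem one_le_one_add_inv_sqrt_div_two {y : ℝ} (hy0 : 0 < y) (hy1 : y ≤ 1) :
    1 ≤ (1 + 1 / √y) / 2 := by
  have : 1 ≤ 1 / √y := one_le_one_div (sqrt_pos.mpr hy0) (sqrt_le_one.mpr hy1)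
  linarith

theorem strictMonoOn_Fd {d c : ℝ} (hd : 0 ≤ d) (hc : 0 < c) : StrictMonoOn (Fd d c) (Ioc 0 1) := by
  refine strictMonoOn_of_hasDerivWithinAt_pos (convex_Ioc 0 1)
    ((continuousOn_Fd d c).mono fun _ hy ↦ hy.1)
    (fun y hy ↦ (hasDerivAt_Fd d c (interior_subset hy).1).hasDerivWithinAt) fun y hy ↦ ?_
  rw [interior_Ioc] at hy
  have hs : 0 < √y := sqrt_pos.mpr hy.1
  have hs1 : √y ≤ 1 := sqrt_le_one.mpr hy.2.le
  have hlog : 0 ≤ log ((1 + 1 / √y) / 2) :=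
    log_nonneg (one_le_one_add_inv_sqrt_div_two hy.1 hy.2.le)
  have hsqrt : d / 2 * (1 / (2 * (√y + 1))) ≤ d / (8 * √y) := by
    rw [mul_one_div, div_div]
    exact div_le_div_of_nonneg_left hd (by positivity) (by linarith)
  nlinarith

theorem mul_log_one_add_inv_sqrt_div_two {y : ℝ} (hy : 0 < y) :
    y * log ((1 + 1 / √y) / 2) = y * log ((√y + 1) / 2) - √y * (√y * log √y) := by
  have hs : 0 < √y := sqrt_pos.mpr hy
  have : (1 + 1 / √y) / 2 = (√y + 1) / 2 / √y := by field_simp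
  rw [this, log_div (by positivity) hs.ne', ← mul_assoc, mul_self_sqrt hy.le]
  ring

theorem tendsto_mul_log_one_add_inv_sqrt_div_two :
    Tendsto (fun y ↦ y * log ((1 + 1 / √y) / 2)) (𝓝[>] 0) (𝓝 0) := by
  have hcont : Continuous fun y ↦ y * log ((√y + 1) / 2) - √y * (√y * log √y) :=
    (continuous_id.mul (Continuous.log (by fun_prop) fun y ↦ by positivity)).sub
      (continuous_sqrt.mul (continuous_mul_log.comp continuous_sqrt))
  have h := (hcont.tendsto 0).mono_left (nhdsWithin_le_nhds (s := Ioi 0))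
  simp only [sqrt_zero, zero_mul, mul_zero, sub_zero] at h
  refine h.congr' ?_
  filter_upwards [self_mem_nhdsWithin] with y hy
  exact (mul_log_one_add_inv_sqrt_div_two hy).symm

theorem tendsto_Fd_nhdsGT_zero (d c : ℝ) : Tendsto (Fd d c) (𝓝[>] 0) (𝓝 (-d / 4)) := by
  have hid : Tendsto (fun y : ℝ ↦ y) (𝓝[>] 0) (𝓝 0) := nhdsWithin_le_nhds
  have hsqrt : Tendsto (fun y ↦ √y) (𝓝[>] 0) (𝓝 0) := by
    simpa using (continuous_sqrt.tendsto 0).mono_left nhdsWithin_le_nhds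
  have h := ((((hsqrt.const_mul d).div_const 4).const_add (-d / 4)).add (hid.mul_const c)).add
    (tendsto_mul_log_one_add_inv_sqrt_div_two.const_mul (d / 2))
  simp only [mul_zero, zero_div, add_zero, zero_mul] at h
  exact h

theorem Fd_unique_zero_general (d : ℕ) (hd : 2 ≤ d)
    (A : ℝ)
    (F : ℝ → ℝ)
    (hF : ∀ y, F y = -(d : ℝ) / 4 + (d : ℝ) * Real.sqrt y / 4 + y * (1 + A)
        + ((d : ℝ) / 2) * y * Real.log ((1 + 1 / Real.sqrt y) / 2))
    (hA1 : -1 < A) :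
    StrictMonoOn F (Set.Ioo 0 1) ∧
    Tendsto F (𝓝[>] 0) (𝓝 (-(d : ℝ) / 4)) ∧
    F 1 = 1 + A ∧ 0 < 1 + A ∧
    ∃! y, y ∈ Set.Ioo (0 : ℝ) 1 ∧ F y = 0 := by
  obtain rfl : F = Fd d (1 + A) := funext fun y ↦ by rw [hF, Fd]; ring
  have hc : 0 < 1 + A := by linarith
  have hd₀ : (0 : ℝ) < d := Nat.cast_pos.mpr (by omega)
  have hmono := strictMonoOn_Fd hd₀.le hc
  refine ⟨hmono.mono Ioo_subset_Ioc_self, tendsto_Fd_nhdsGT_zero _ _, Fd_one _ _, hc, ?_⟩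
  exact existsUnique_eq_zero_of_strictMonoOn_Ioc one_pos
    ((continuousOn_Fd _ _).mono Ioc_subset_Ioi_self) hmono (tendsto_Fd_nhdsGT_zero _ _)
    (by linarith) (by rwa [Fd_one])

theorem Fd_unique_zero (d : ℕ) (hd : 2 ≤ d)
    (A : ℝ)
    (hA : A = Real.log ((2 : ℝ) ^ ((d : ℝ) / 2) * Real.exp ((d : ℝ) / 4) * Real.sqrt 2
        / (8 * (d : ℝ)) ^ ((d : ℝ) / 4) * Real.sqrt (Real.Gamma d / Real.Gamma ((d : ℝ) / 2))))
    (F : ℝ → ℝ)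
    (hF : ∀ y, F y = -(d : ℝ) / 4 + (d : ℝ) * Real.sqrt y / 4 + y * (1 + A)
        + ((d : ℝ) / 2) * y * Real.log ((1 + 1 / Real.sqrt y) / 2))
    (hA1 : -1 < A) :
    StrictMonoOn F (Set.Ioo 0 1) ∧
    Tendsto F (𝓝[>] 0) (𝓝 (-(d : ℝ) / 4)) ∧
    F 1 = 1 + A ∧ 0 < 1 + A ∧
    ∃! y, y ∈ Set.Ioo (0 : ℝ) 1 ∧ F y = 0 :=
  Fd_unique_zero_general d hd A F hF hA1
end
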